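/- arXiv:2103.15740 — 11 statements merged into one kernel-verified Lean document; each statement's English description precedes it below -/
import Mathlib

section
/- Let μ > 1 and v > μ. Then the function F(z) = (v - μ)·ln z + (μ - z)·ln v has exactly one root z in the interval (0, 1). -/
/-!
`F(z) = (v - μ) ln z + (μ - z) ln v` is concave on `(0, ∞)` and positive at `z = 1`. At
`z₀ = v ^ (-μ / (v - μ)) ∈ (0, 1)` the logarithmic term cancels `μ ln v`, so `F(z₀) = -z₀ ln v < 0`.
The intermediate value theorem gives a root in `(z₀, 1)`, and concavity makes it unique: past a
zero of a concave function that is positive at `1`, the function stays positive up to `1`.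
-/

open Real Set

theorem ConcaveOn.pos_of_mem_openSegment {E : Type*} [AddCommGroup E] [Module ℝ E]
    {s : Set E} {f : E → ℝ} (hf : ConcaveOn ℝ s f) {x y z : E} (hx : x ∈ s) (hz : z ∈ s)
    (hy : y ∈ openSegment ℝ x z) (hfx : 0 ≤ f x) (hfz : 0 < f z) : 0 < f y := by
  obtain ⟨a, b, ha, hb, hab, rfl⟩ := hy
  calc 0 < a • f x + b • f z := by simp only [smul_eq_mul]; positivity
    _ ≤ f (a • x + b • z) := hf.2 hx hz ha.le hb.le hab

theorem ConcaveOn.eq_of_apply_eq_zero_of_lt {s : Set ℝ} {f : ℝ → ℝ} (hf : ConcaveOn ℝ s f)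
    {b : ℝ} (hb : b ∈ s) (hfb : 0 < f b) {x y : ℝ} (hx : x ∈ s) (hy : y ∈ s) (hxb : x < b)
    (hyb : y < b) (hfx : f x = 0) (hfy : f y = 0) : x = y := by
  rcases lt_trichotomy x y with hxy | hxy | hxy
  · refine absurd hfy (hf.pos_of_mem_openSegment hx hb ?_ hfx.ge hfb).ne'
    rw [openSegment_eq_Ioo hxb]
    exact ⟨hxy, hyb⟩
  · exact hxy
  · refine absurd hfx (hf.pos_of_mem_openSegment hy hb ?_ hfy.ge hfb).ne'
    rw [openSegment_eq_Ioo hyb]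
    exact ⟨hxy, hxb⟩

theorem ConcaveOn.existsUnique_zero_Ioo {f : ℝ → ℝ} {a b : ℝ} (hf : ConcaveOn ℝ (Ioc a b) f)
    (hcont : ContinuousOn f (Ioc a b)) {c : ℝ} (hc : c ∈ Ioo a b) (hfc : f c < 0)
    (hfb : 0 < f b) : ∃! z, z ∈ Ioo a b ∧ f z = 0 := by
  have hb : b ∈ Ioc a b := ⟨hc.1.trans hc.2, le_rfl⟩
  obtain ⟨z, hz, hfz⟩ := intermediate_value_Ioo hc.2.le
    (hcont.mono (Icc_subset_Ioc_iff hc.2.le |>.2 ⟨hc.1, le_rfl⟩)) ⟨hfc, hfb⟩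
  refine ⟨z, ⟨⟨hc.1.trans hz.1, hz.2⟩, hfz⟩, fun w ⟨hw, hfw⟩ => ?_⟩
  exact hf.eq_of_apply_eq_zero_of_lt hb hfb (Ioo_subset_Ioc_self hw)
    ⟨hc.1.trans hz.1, hz.2.le⟩ hw.2 hz.2 hfw hfz

theorem stmt1 (μ v : ℝ) (hμ : 1 < μ) (hv : μ < v) :
    ∃! z : ℝ, z ∈ Set.Ioo (0 : ℝ) 1 ∧
      (v - μ) * Real.log z + (μ - z) * Real.log v = 0 := by
  have hvμ : 0 < v - μ := sub_pos.2 hv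
  have hlogv : 0 < log v := log_pos (hμ.trans hv)
  set F : ℝ → ℝ := fun z => (v - μ) * log z + (μ - z) * log v
  have hconcave : ConcaveOn ℝ (Ioi 0) F :=
    (strictConcaveOn_log_Ioi.concaveOn.smul hvμ.le).add
      (((LinearMap.smulRight LinearMap.id (-log v)).concaveOn (convex_Ioi 0)).add_const
        (μ * log v)) |>.congr fun z _ => by
        simp only [Pi.add_apply, smul_eq_mul, LinearMap.coe_smulRight, LinearMap.id_coe, id_eq]
        ring
  have hcont : ContinuousOn F (Ioi 0) := by
    fun_prop (disch := intro x hx; exact hx.ne')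
  set z₀ := exp (-(μ * log v) / (v - μ))
  have hz₀ : z₀ ∈ Ioo 0 1 :=
    ⟨exp_pos _, exp_lt_one_iff.2 (div_neg_of_neg_of_pos (by nlinarith) hvμ)⟩
  have hFz₀ : F z₀ = -z₀ * log v := by
    simp only [F, z₀, log_exp]
    field_simp
    ring
  refine (hconcave.subset Ioc_subset_Ioi_self (convex_Ioc 0 1)).existsUnique_zero_Ioo
    (hcont.mono Ioc_subset_Ioi_self) hz₀ ?_ ?_
  · rw [hFz₀, neg_mul]
    exact neg_neg_of_pos (mul_pos hz₀.1 hlogv)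
  · simpa only [F, log_one, mul_zero, zero_add] using mul_pos (sub_pos.2 hμ) hlogv
end

section
/- Let μ > 1 and 0 < v < 1. Then the function F(z) = (v - μ)·ln z + (μ - z)·ln v has exactly one root z in the interval (μ, ∞). -/
/-!
Write `F z = (v - μ) log z - (log v) z + μ log v`. Since `v - μ < 0` and `-log v > 0`, `F` is
strictly convex on `(0, ∞)` and tends to `+∞` (because `log z = o(z)`), while
`F μ = (v - μ) log μ < 0`. The intermediate value theorem gives a root beyond `μ`; there is no
second one, since a strictly convex function that has risen above its value at `μ` keeps rising.
-/

open Set Filter Topology Real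

theorem StrictConvexOn.lt_of_lt_of_lt {𝕜 : Type*} [Field 𝕜] [LinearOrder 𝕜]
    [IsStrictOrderedRing 𝕜] {s : Set 𝕜} {f : 𝕜 → 𝕜} (hf : StrictConvexOn 𝕜 s f) {x y z : 𝕜}
    (hx : x ∈ s) (hz : z ∈ s) (hxy : x < y) (hyz : y < z) (hfxy : f x < f y) : f y < f z := by
  have hslope := hf.slope_strict_mono_adjacent hx hz hxy hyz
  have hleft : 0 < (f y - f x) / (y - x) := div_pos (sub_pos.2 hfxy) (sub_pos.2 hxy)
  have hright : 0 < (f z - f y) / (z - y) := hleft.trans hslope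
  exact sub_pos.1 ((div_pos_iff_of_pos_right (sub_pos.2 hyz)).1 hright)

theorem StrictConvexOn.existsUnique_zero_Ioi {f : ℝ → ℝ} {a : ℝ}
    (hf : StrictConvexOn ℝ (Ici a) f) (hcont : ContinuousOn f (Ici a))
    (htop : Tendsto f atTop atTop) (hfa : f a < 0) :
    ∃! z, z ∈ Ioi a ∧ f z = 0 := by
  obtain ⟨z, hz, hfz⟩ := intermediate_value_Ioi hcont htop hfa
  refine ⟨z, ⟨hz, hfz⟩, fun y ⟨hy, hfy⟩ => ?_⟩
  have ha : a ∈ Ici a := self_mem_Ici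
  rcases lt_trichotomy y z with hyz | rfl | hzy
  · exact ((hf.lt_of_lt_of_lt ha (Ioi_subset_Ici_self hz) hy hyz (by rwa [hfy])).ne
      (hfy.trans hfz.symm)).elim
  · rfl
  · exact ((hf.lt_of_lt_of_lt ha (Ioi_subset_Ici_self hy) hz hzy (by rwa [hfz])).ne
      (hfz.trans hfy.symm)).elim

theorem strictConvexOn_mul_log_add_mul_add {c : ℝ} (hc : c < 0) (a b : ℝ) :
    StrictConvexOn ℝ (Ioi 0) fun z => c * log z + a * z + b := by
  refine ⟨convex_Ioi 0, fun x hx y hy hxy s t hs ht hst => ?_⟩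
  have hlog := strictConcaveOn_log_Ioi.2 hx hy hxy hs ht hst
  simp only [smul_eq_mul] at hlog ⊢
  have hmul := mul_lt_mul_of_neg_left hlog hc
  linear_combination hmul - b * hst

theorem tendsto_mul_log_add_mul_add_atTop (c : ℝ) {a : ℝ} (ha : 0 < a) (b : ℝ) :
    Tendsto (fun z => c * log z + a * z + b) atTop atTop := by
  have hratio : Tendsto (fun z => a + c * (log z / z)) atTop (𝓝 a) := by
    simpa using (tendsto_pow_log_div_mul_add_atTop 1 0 1 one_ne_zero).const_mul c |>.const_add a
  refine tendsto_atTop_add_const_right _ b ((tendsto_id.atTop_mul_pos ha hratio).congr' ?_)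
  filter_upwards [eventually_ne_atTop 0] with z hz
  simp only [id]
  field_simp
  ring

theorem stmt2 (μ v : ℝ) (hμ : 1 < μ) (hv0 : 0 < v) (hv1 : v < 1) :
    ∃! z : ℝ, z ∈ Set.Ioi μ ∧
      (v - μ) * Real.log z + (μ - z) * Real.log v = 0 := by
  set F : ℝ → ℝ := fun z => (v - μ) * log z + -log v * z + μ * log v
  have hF : ∀ z, (v - μ) * log z + (μ - z) * log v = F z := fun z => by ring
  simp only [hF]
  have hsub : Ici μ ⊆ Ioi 0 := Ici_subset_Ioi.2 (by linarith)
  refine StrictConvexOn.existsUnique_zero_Ioi ?_ ?_ ?_ ?_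
  · exact (strictConvexOn_mul_log_add_mul_add (by linarith) _ _).subset hsub (convex_Ici μ)
  · exact ContinuousOn.add (by fun_prop (disch := grind)) continuousOn_const
  · exact tendsto_mul_log_add_mul_add_atTop _ (neg_pos.2 (log_neg hv0 hv1)) _
  · have : (v - μ) * log μ < 0 := mul_neg_of_neg_of_pos (by linarith) (log_pos hμ)
    linear_combination this
end

section
/- Let X be a positive random variable with E[ln X] = 0 and E[X] ≤ μ where μ > 1. Then for every real v > μ, P(X ≥ v) ≤ (μ - z_v)/(v - z_v), where z_v is the unique root in (0,1) of (v - μ)·ln z + (μ - z)·ln v = 0. -/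
/-!
Markov's inequality applied to `X` itself only gives `μ / v`; the constraint `E[ln X] = 0` is
brought in through the nonnegative function `φ(x) = x - z - z (ln x - ln z)`, whose expectation is
`E[X] - z + z ln z ≤ μ - z + z ln z` precisely because `E[ln X] = 0`. Since `φ` increases on
`[z, ∞)`, Markov's inequality for `φ(X)` gives `P(X ≥ v) ≤ (μ - z + z ln z) / φ(v)`, and the
defining equation of `z` makes this ratio equal to `(μ - z) / (v - z)`.
-/

open MeasureTheory Real

theorem measureReal_le_integral_comp_div {Ω : Type*} [MeasurableSpace Ω] {P : Measure Ω}
    [IsFiniteMeasure P] {X : Ω → ℝ} {g : ℝ → ℝ} {v : ℝ} (hg : MonotoneOn g (Set.Ici v))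
    (hgv : 0 < g v) (hg0 : 0 ≤ᵐ[P] fun ω => g (X ω)) (hgX : Integrable (fun ω => g (X ω)) P) :
    P.real {ω | v ≤ X ω} ≤ (∫ ω, g (X ω) ∂P) / g v := by
  rw [le_div_iff₀ hgv, mul_comm]
  calc g v * P.real {ω | v ≤ X ω} ≤ g v * P.real {ω | g v ≤ g (X ω)} := by
        refine mul_le_mul_of_nonneg_left (measureReal_mono fun ω (h : v ≤ X ω) => ?_) hgv.le
        exact hg Set.self_mem_Ici h h
    _ ≤ ∫ ω, g (X ω) ∂P := mul_meas_ge_le_integral_of_nonneg hg0 hgX _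

/-- `z` times the Bregman divergence of `-log` between `x` and `z`. -/
noncomputable def logGap (z x : ℝ) : ℝ := x - z - z * (log x - log z)

lemma logGap_eq_mul (z : ℝ) {x : ℝ} (hz : 0 < z) (hx : 0 < x) :
    logGap z x = z * (x / z - 1 - log (x / z)) := by
  rw [logGap, log_div hx.ne' hz.ne']
  field_simp

lemma logGap_nonneg {z x : ℝ} (hz : 0 < z) (hx : 0 < x) : 0 ≤ logGap z x := by
  rw [logGap_eq_mul z hz hx]
  have := log_le_sub_one_of_pos (div_pos hx hz)
  exact mul_nonneg hz.le (by linarith)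

lemma logGap_pos {z x : ℝ} (hz : 0 < z) (hx : 0 < x) (hxz : x ≠ z) : 0 < logGap z x := by
  rw [logGap_eq_mul z hz hx]
  have := log_lt_sub_one_of_pos (div_pos hx hz) (by rwa [ne_eq, div_eq_one_iff_eq hz.ne'])
  exact mul_pos hz (by linarith)

lemma logGap_monotoneOn {z : ℝ} (hz : 0 < z) : MonotoneOn (logGap z) (Set.Ici z) := by
  intro a (ha : z ≤ a) b (hb : z ≤ b) hab
  have ha0 : 0 < a := hz.trans_le ha
  have hlog : log b - log a ≤ b / a - 1 := by
    rw [← log_div (ha0.trans_le hab).ne' ha0.ne']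
    exact log_le_sub_one_of_pos (div_pos (ha0.trans_le hab) ha0)
  have hslope : z * (b / a - 1) ≤ b - a := by
    rw [show b - a = a * (b / a - 1) by field_simp]
    exact mul_le_mul_of_nonneg_right ha (by rw [sub_nonneg, le_div_iff₀ ha0]; linarith)
  have := mul_le_mul_of_nonneg_left hlog hz.le
  simp only [logGap]
  linarith

lemma integrable_logGap {Ω : Type*} [MeasurableSpace Ω] {P : Measure Ω} [IsFiniteMeasure P]
    {X : Ω → ℝ} (hXint : Integrable X P) (hlnint : Integrable (fun ω => log (X ω)) P) (z : ℝ) :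
    Integrable (fun ω => logGap z (X ω)) P :=
  (hXint.sub (integrable_const z)).sub ((hlnint.sub (integrable_const _)).const_mul z)

lemma integral_logGap {Ω : Type*} [MeasurableSpace Ω] {P : Measure Ω} [IsProbabilityMeasure P]
    {X : Ω → ℝ} (hXint : Integrable X P) (hlnint : Integrable (fun ω => log (X ω)) P) (z : ℝ) :
    ∫ ω, logGap z (X ω) ∂P = (∫ ω, X ω ∂P) - z - z * ((∫ ω, log (X ω) ∂P) - log z) := by
  have hX' : Integrable (fun ω => X ω - z) P := hXint.sub (integrable_const z)
  have hlog' : Integrable (fun ω => log (X ω) - log z) P := hlnint.sub (integrable_const _)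
  unfold logGap
  rw [integral_sub hX' (hlog'.const_mul z), integral_sub hXint (integrable_const z),
    integral_const_mul, integral_sub hlnint (integrable_const _)]
  simp

theorem stmt4_general {Ω : Type*} [MeasurableSpace Ω] (P : Measure Ω) [IsProbabilityMeasure P]
    (X : Ω → ℝ) (hXpos : ∀ ω, 0 < X ω)
    (hXint : Integrable X P) (hlnint : Integrable (fun ω => Real.log (X ω)) P)
    (hG : ∫ ω, Real.log (X ω) ∂P = 0)
    (μ v z : ℝ) (hμ : 1 < μ) (hA : ∫ ω, X ω ∂P ≤ μ) (hv : μ < v)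
    (hz : z ∈ Set.Ioo (0 : ℝ) 1)
    (hroot : (v - μ) * Real.log z + (μ - z) * Real.log v = 0) :
    (P {ω | v ≤ X ω}).toReal ≤ (μ - z) / (v - z) := by
  obtain ⟨hz0, hz1⟩ := hz
  have hzv : z < v := by linarith
  have hgap : 0 < logGap z v := logGap_pos hz0 (hz0.trans hzv) hzv.ne'
  calc (P {ω | v ≤ X ω}).toReal ≤ (∫ ω, logGap z (X ω) ∂P) / logGap z v :=
        measureReal_le_integral_comp_div
          ((logGap_monotoneOn hz0).mono (Set.Ici_subset_Ici.2 hzv.le)) hgap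
          (ae_of_all _ fun ω => logGap_nonneg hz0 (hXpos ω)) (integrable_logGap hXint hlnint z)
    _ ≤ (μ - z + z * log z) / logGap z v := by
        gcongr
        rw [integral_logGap hXint hlnint, hG]
        linarith
    _ = (μ - z) / (v - z) := by
        rw [div_eq_div_iff hgap.ne' (sub_pos.2 hzv).ne', logGap]
        linear_combination z * hroot

theorem stmt4 {Ω : Type*} [MeasurableSpace Ω] (P : Measure Ω) [IsProbabilityMeasure P]
    (X : Ω → ℝ) (hXm : Measurable X) (hXpos : ∀ ω, 0 < X ω)
    (hXint : Integrable X P) (hlnint : Integrable (fun ω => Real.log (X ω)) P)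
    (hG : ∫ ω, Real.log (X ω) ∂P = 0)
    (μ v z : ℝ) (hμ : 1 < μ) (hA : ∫ ω, X ω ∂P ≤ μ) (hv : μ < v)
    (hz : z ∈ Set.Ioo (0 : ℝ) 1)
    (hroot : (v - μ) * Real.log z + (μ - z) * Real.log v = 0) :
    (P {ω | v ≤ X ω}).toReal ≤ (μ - z) / (v - z) :=
  stmt4_general P X hXpos hXint hlnint hG μ v z hμ hA hv hz hroot
end

section
/- Let X be a positive random variable with E[ln X] = 0 and E[X] ≤ μ where μ > 1. Then for every real v with 0 < v < 1, P(X ≤ v) ≤ (μ - z_v)/(v - z_v), where z_v is the unique root in (μ,∞) of (v - μ)·ln z + (μ - z)·ln v = 0. -/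
/-!
Markov's inequality applied to the Itakura–Saito divergence `D(X, z) = X/z - log(X/z) - 1 ≥ 0`:
since `D(·, z)` decreases on `(0, z]`, the event `X ≤ v` forces `D(X, z) ≥ D(v, z) > 0`, while
`E[D(X, z)] ≤ μ/z + log z - 1` by `E[ln X] = 0` and `E[X] ≤ μ`. The defining equation of `z`
is exactly what turns the resulting bound `(μ/z + log z - 1) / D(v, z)` into `(μ - z)/(v - z)`.
-/

open MeasureTheory

namespace Real

noncomputable def itakuraSaito (x z : ℝ) : ℝ := x / z - log x + log z - 1

variable {x y z : ℝ}

theorem itakuraSaito_eq (hx : 0 < x) (hz : 0 < z) :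
    itakuraSaito x z = x / z - log (x / z) - 1 := by
  rw [itakuraSaito, log_div hx.ne' hz.ne']
  ring

theorem itakuraSaito_nonneg (hx : 0 < x) (hz : 0 < z) : 0 ≤ itakuraSaito x z := by
  rw [itakuraSaito_eq hx hz]
  linarith [log_le_sub_one_of_pos (div_pos hx hz)]

theorem itakuraSaito_pos (hx : 0 < x) (hz : 0 < z) (hxz : x ≠ z) : 0 < itakuraSaito x z := by
  have hne : x / z ≠ 1 := fun h => hxz ((div_eq_one_iff_eq hz.ne').mp h)
  rw [itakuraSaito_eq hx hz]
  linarith [log_lt_sub_one_of_pos (div_pos hx hz) hne]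

theorem itakuraSaito_le_of_le (hx : 0 < x) (hxy : x ≤ y) (hyz : y ≤ z) :
    itakuraSaito y z ≤ itakuraSaito x z := by
  have hy : 0 < y := hx.trans_le hxy
  have hlog : log x - log y ≤ (x - y) / y := by
    rw [← log_div hx.ne' hy.ne', sub_div, div_self hy.ne']
    exact log_le_sub_one_of_pos (div_pos hx hy)
  have hslope : (x - y) / y ≤ (x - y) / z := by
    rw [div_le_div_iff₀ hy (hy.trans_le hyz)]
    nlinarith
  simp only [itakuraSaito]
  linarith [sub_div x y z]

section Integral

variable {Ω : Type*} [MeasurableSpace Ω] {P : Measure Ω} {X : Ω → ℝ}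

theorem integrable_itakuraSaito [IsFiniteMeasure P] (hX : Integrable X P)
    (hlogX : Integrable (fun ω => log (X ω)) P) (z : ℝ) :
    Integrable (fun ω => itakuraSaito (X ω) z) P :=
  ((hX.div_const z).sub hlogX |>.add (integrable_const _)).sub (integrable_const _)

theorem integral_itakuraSaito [IsProbabilityMeasure P] (hX : Integrable X P)
    (hlogX : Integrable (fun ω => log (X ω)) P) (z : ℝ) :
    ∫ ω, itakuraSaito (X ω) z ∂P = (∫ ω, X ω ∂P) / z - ∫ ω, log (X ω) ∂P + log z - 1 := by
  simp only [itakuraSaito]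
  have hdiff : Integrable (fun ω => X ω / z - log (X ω)) P := (hX.div_const z).sub hlogX
  rw [integral_sub (f := fun ω => X ω / z - log (X ω) + log z) (hdiff.add (integrable_const _))
      (integrable_const _),
    integral_add hdiff (integrable_const _), integral_sub (hX.div_const z) hlogX, integral_div]
  simp

end Integral

theorem div_itakuraSaito_eq_of_log_root {μ v : ℝ} (hv : 0 < v) (hz : 0 < z) (hvz : v ≠ z)
    (hroot : (v - μ) * log z + (μ - z) * log v = 0) :
    (μ / z + log z - 1) / itakuraSaito v z = (μ - z) / (v - z) := by
  rw [div_eq_div_iff (itakuraSaito_pos hv hz hvz).ne' (sub_ne_zero.mpr hvz), itakuraSaito]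
  field_simp
  linear_combination z * hroot

end Real

open Real in
theorem stmt5_general {Ω : Type*} [MeasurableSpace Ω] (P : Measure Ω) [IsProbabilityMeasure P]
    (X : Ω → ℝ) (hXpos : ∀ ω, 0 < X ω)
    (hXint : Integrable X P) (hlnint : Integrable (fun ω => Real.log (X ω)) P)
    (hG : ∫ ω, Real.log (X ω) ∂P = 0)
    (μ v z : ℝ) (hμ : 1 < μ) (hA : ∫ ω, X ω ∂P ≤ μ) (hv0 : 0 < v) (hv1 : v < 1)
    (hz : z ∈ Set.Ioi μ)
    (hroot : (v - μ) * Real.log z + (μ - z) * Real.log v = 0) :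
    (P {ω | X ω ≤ v}).toReal ≤ (μ - z) / (v - z) := by
  have hvz : v < z := by linarith [Set.mem_Ioi.mp hz]
  have hz0 : 0 < z := hv0.trans hvz
  have hDv : 0 < itakuraSaito v z := itakuraSaito_pos hv0 hz0 hvz.ne
  have hsub : {ω | X ω ≤ v} ⊆ {ω | itakuraSaito v z ≤ itakuraSaito (X ω) z} :=
    fun ω hω => itakuraSaito_le_of_le (hXpos ω) hω hvz.le
  have hmarkov := mul_meas_ge_le_integral_of_nonneg
    (ae_of_all _ fun ω => itakuraSaito_nonneg (hXpos ω) hz0)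
    (integrable_itakuraSaito hXint hlnint z) (itakuraSaito v z)
  calc P.real {ω | X ω ≤ v}
      ≤ P.real {ω | itakuraSaito v z ≤ itakuraSaito (X ω) z} := measureReal_mono hsub
    _ ≤ (∫ ω, itakuraSaito (X ω) z ∂P) / itakuraSaito v z := by
        rw [le_div_iff₀ hDv, mul_comm]; exact hmarkov
    _ ≤ (μ / z + log z - 1) / itakuraSaito v z := by
        rw [integral_itakuraSaito hXint hlnint, hG, sub_zero]
        gcongr
    _ = (μ - z) / (v - z) := div_itakuraSaito_eq_of_log_root hv0 hz0 hvz.ne hroot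

theorem stmt5 {Ω : Type*} [MeasurableSpace Ω] (P : Measure Ω) [IsProbabilityMeasure P]
    (X : Ω → ℝ) (hXm : Measurable X) (hXpos : ∀ ω, 0 < X ω)
    (hXint : Integrable X P) (hlnint : Integrable (fun ω => Real.log (X ω)) P)
    (hG : ∫ ω, Real.log (X ω) ∂P = 0)
    (μ v z : ℝ) (hμ : 1 < μ) (hA : ∫ ω, X ω ∂P ≤ μ) (hv0 : 0 < v) (hv1 : v < 1)
    (hz : z ∈ Set.Ioi μ)
    (hroot : (v - μ) * Real.log z + (μ - z) * Real.log v = 0) :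
    (P {ω | X ω ≤ v}).toReal ≤ (μ - z) / (v - z) :=
  stmt5_general P X hXpos hXint hlnint hG μ v z hμ hA hv0 hv1 hz hroot
end

section
/- Let X be a positive random variable with E[ln X] = 0 and E[X] ≤ μ where μ > 1. Then for every real v > 1, P(X ≥ v) ≤ (μ - 1)/(v - 1 - ln v). -/
/-!
Apply Markov's inequality to `X - 1 - ln X`, which is nonnegative since `ln x ≤ x - 1`, has mean
`E[X] - 1 ≤ μ - 1` because `E[ln X] = 0`, and dominates `v - 1 - ln v > 0` on the event `{X ≥ v}`
since `x ↦ x - 1 - ln x` is increasing on `[1, ∞)`.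
-/

open MeasureTheory

namespace Real

theorem sub_one_sub_log_nonneg {x : ℝ} (hx : 0 < x) : 0 ≤ x - 1 - log x := by
  linarith [log_le_sub_one_of_pos hx]

theorem sub_one_sub_log_pos {x : ℝ} (hx : 0 < x) (hx1 : x ≠ 1) : 0 < x - 1 - log x := by
  linarith [log_lt_sub_one_of_pos hx hx1]

theorem sub_one_sub_log_le_of_one_le_of_le {v x : ℝ} (hv : 1 ≤ v) (hvx : v ≤ x) :
    v - 1 - log v ≤ x - 1 - log x := by
  have hv0 : 0 < v := by linarith
  have hlog : log x - log v ≤ x / v - 1 := by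
    rw [← log_div (by linarith) hv0.ne']
    exact log_le_sub_one_of_pos (div_pos (by linarith) hv0)
  have hdiv : x / v - 1 ≤ x - v := by
    rw [div_sub_one hv0.ne']
    exact div_le_self (by linarith) hv
  linarith

end Real

theorem measureReal_le_le_integral_comp_div {Ω : Type*} [MeasurableSpace Ω] (P : Measure Ω)
    [IsFiniteMeasure P] (X : Ω → ℝ) (φ : ℝ → ℝ) {v : ℝ} (hφ_nonneg : ∀ ω, 0 ≤ φ (X ω))
    (hφ_ge : ∀ x, v ≤ x → φ v ≤ φ x) (hφv : 0 < φ v) (hint : Integrable (fun ω => φ (X ω)) P) :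
    P.real {ω | v ≤ X ω} ≤ (∫ ω, φ (X ω) ∂P) / φ v := by
  rw [le_div_iff₀' hφv]
  calc φ v * P.real {ω | v ≤ X ω} ≤ φ v * P.real {ω | φ v ≤ φ (X ω)} :=
        mul_le_mul_of_nonneg_left (measureReal_mono fun _ hω => hφ_ge _ hω) hφv.le
    _ ≤ ∫ ω, φ (X ω) ∂P :=
        mul_meas_ge_le_integral_of_nonneg (Filter.Eventually.of_forall hφ_nonneg) hint _

theorem stmt6_general {Ω : Type*} [MeasurableSpace Ω] (P : Measure Ω) [IsProbabilityMeasure P]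
    (X : Ω → ℝ) (hXpos : ∀ ω, 0 < X ω)
    (hXint : Integrable X P) (hlnint : Integrable (fun ω => Real.log (X ω)) P)
    (hG : ∫ ω, Real.log (X ω) ∂P = 0)
    (μ v : ℝ) (hA : ∫ ω, X ω ∂P ≤ μ) (hv : 1 < v) :
    (P {ω | v ≤ X ω}).toReal ≤ (μ - 1) / (v - 1 - Real.log v) := by
  have hcv : 0 < v - 1 - Real.log v := Real.sub_one_sub_log_pos (by linarith) hv.ne'
  have hint : Integrable (fun ω => X ω - 1) P := hXint.sub (integrable_const 1)
  have hmean : ∫ ω, X ω - 1 - Real.log (X ω) ∂P = (∫ ω, X ω ∂P) - 1 := by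
    rw [integral_sub hint hlnint, integral_sub hXint (integrable_const 1), hG]
    simp
  calc P.real {ω | v ≤ X ω}
      ≤ (∫ ω, X ω - 1 - Real.log (X ω) ∂P) / (v - 1 - Real.log v) :=
        measureReal_le_le_integral_comp_div P X (fun x => x - 1 - Real.log x)
          (fun ω => Real.sub_one_sub_log_nonneg (hXpos ω))
          (fun _ => Real.sub_one_sub_log_le_of_one_le_of_le hv.le)
          hcv
          (hint.sub hlnint)
    _ ≤ (μ - 1) / (v - 1 - Real.log v) := by
        rw [hmean]
        gcongr

theorem stmt6 {Ω : Type*} [MeasurableSpace Ω] (P : Measure Ω) [IsProbabilityMeasure P]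
    (X : Ω → ℝ) (hXm : Measurable X) (hXpos : ∀ ω, 0 < X ω)
    (hXint : Integrable X P) (hlnint : Integrable (fun ω => Real.log (X ω)) P)
    (hG : ∫ ω, Real.log (X ω) ∂P = 0)
    (μ v : ℝ) (hμ : 1 < μ) (hA : ∫ ω, X ω ∂P ≤ μ) (hv : 1 < v) :
    (P {ω | v ≤ X ω}).toReal ≤ (μ - 1) / (v - 1 - Real.log v) :=
  stmt6_general P X hXpos hXint hlnint hG μ v hA hv
end

section
/- Let X be a positive random variable with E[ln X] = 0 and E[X] ≤ μ where μ > 1. Then for every real v with 0 < v < 1, P(X ≤ v) ≤ (μ - 1)/(v - 1 - ln v). -/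
/-!
The function `t ↦ t - 1 - log t` is nonnegative and decreasing on `(0, 1]`, so `X ≤ v` forces
`X - 1 - log X ≥ v - 1 - log v > 0`. Markov's inequality for the nonnegative variable
`X - 1 - log X`, whose mean is `E[X] - 1 - E[ln X] ≤ μ - 1`, gives the bound.
-/

open MeasureTheory Real

lemma sub_one_sub_log_antitoneOn : AntitoneOn (fun t : ℝ => t - 1 - log t) (Set.Ioc 0 1) := by
  rintro x ⟨hx0, -⟩ y ⟨hy0, hy1⟩ hxy
  have hlog : 1 - (y / x)⁻¹ ≤ log y - log x := by
    rw [← log_div hy0.ne' hx0.ne']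
    exact one_sub_inv_le_log_of_pos (div_pos hy0 hx0)
  have hfrac : y - x ≤ 1 - (y / x)⁻¹ := by
    rw [inv_div, one_sub_div hy0.ne', le_div_iff₀ hy0]
    nlinarith
  dsimp only
  linarith

lemma integral_sub_one_sub_log {Ω : Type*} [MeasurableSpace Ω] (P : Measure Ω)
    [IsProbabilityMeasure P] {X : Ω → ℝ} (hXint : Integrable X P)
    (hlnint : Integrable (fun ω => log (X ω)) P) :
    ∫ ω, X ω - 1 - log (X ω) ∂P = ∫ ω, X ω ∂P - 1 - ∫ ω, log (X ω) ∂P := by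
  have hXsub : Integrable (fun ω => X ω - 1) P := hXint.sub (integrable_const 1)
  rw [integral_sub hXsub hlnint, integral_sub hXint (integrable_const 1), integral_const,
    probReal_univ, one_smul]

theorem stmt7_general {Ω : Type*} [MeasurableSpace Ω] (P : Measure Ω) [IsProbabilityMeasure P]
    (X : Ω → ℝ) (hXpos : ∀ ω, 0 < X ω)
    (hXint : Integrable X P) (hlnint : Integrable (fun ω => Real.log (X ω)) P)
    (hG : ∫ ω, Real.log (X ω) ∂P = 0)
    (μ v : ℝ) (hA : ∫ ω, X ω ∂P ≤ μ) (hv0 : 0 < v) (hv1 : v < 1) :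
    (P {ω | X ω ≤ v}).toReal ≤ (μ - 1) / (v - 1 - Real.log v) := by
  set Y : Ω → ℝ := fun ω => X ω - 1 - log (X ω)
  have hc : 0 < v - 1 - log v := by linarith [log_lt_sub_one_of_pos hv0 hv1.ne]
  have hYnonneg : 0 ≤ᵐ[P] Y :=
    .of_forall fun ω => sub_nonneg.2 (log_le_sub_one_of_pos (hXpos ω))
  have hYint : Integrable Y P := (hXint.sub (integrable_const 1)).sub hlnint
  have hsub : {ω | X ω ≤ v} ⊆ {ω | v - 1 - log v ≤ Y ω} := fun ω hω =>
    sub_one_sub_log_antitoneOn ⟨hXpos ω, hω.trans hv1.le⟩ ⟨hv0, hv1.le⟩ hω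
  rw [le_div_iff₀ hc, mul_comm]
  calc (v - 1 - log v) * P.real {ω | X ω ≤ v}
      ≤ (v - 1 - log v) * P.real {ω | v - 1 - log v ≤ Y ω} :=
        mul_le_mul_of_nonneg_left (measureReal_mono hsub) hc.le
    _ ≤ ∫ ω, Y ω ∂P := mul_meas_ge_le_integral_of_nonneg hYnonneg hYint _
    _ ≤ μ - 1 := by rw [integral_sub_one_sub_log P hXint hlnint, hG]; linarith

theorem stmt7 {Ω : Type*} [MeasurableSpace Ω] (P : Measure Ω) [IsProbabilityMeasure P]
    (X : Ω → ℝ) (hXm : Measurable X) (hXpos : ∀ ω, 0 < X ω)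
    (hXint : Integrable X P) (hlnint : Integrable (fun ω => Real.log (X ω)) P)
    (hG : ∫ ω, Real.log (X ω) ∂P = 0)
    (μ v : ℝ) (hμ : 1 < μ) (hA : ∫ ω, X ω ∂P ≤ μ) (hv0 : 0 < v) (hv1 : v < 1) :
    (P {ω | X ω ≤ v}).toReal ≤ (μ - 1) / (v - 1 - Real.log v) :=
  stmt7_general P X hXpos hXint hlnint hG μ v hA hv0 hv1
end

section
/- Let 1 < μ < v and let z_v ∈ (0,1) be the unique root of F(z) = (v - μ)·ln z + (μ - z)·ln v = 0. Then the two-point random variable X with P(X = v) = (μ-z_v)/(v-z_v) and P(X = z_v) = 1 - (μ-z_v)/(v-z_v) satisfies E[X] = μ and E[ln X] = 0, so that the bound (μ-z_v)/(v-z_v) on P(X ≥ v) is attained. -/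
/-!
Once `X` is known to take only the values `v` and `z` almost surely, every expectation
`E[g X]` is the weighted sum `p g(v) + (1 - p) g(z)` with `p = (μ - z)/(v - z)`, and
`P(X ≥ v) = P(X = v) = p`. The weights are chosen so that `p v + (1 - p) z = μ`, while
`p ln v + (1 - p) ln z = F(z)/(v - z)`, which vanishes because `z` is the root of `F`.
-/

open MeasureTheory

section TwoValued

variable {Ω α : Type*} [MeasurableSpace Ω] [MeasurableSpace α] [MeasurableSingletonClass α]
  {P : Measure Ω} {X : Ω → α} {a b : α}

lemma ae_eq_or_eq_of_measure_add_eq_one [IsProbabilityMeasure P] (hX : Measurable X)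
    (hab : a ≠ b) (h : P {ω | X ω = a} + P {ω | X ω = b} = 1) :
    ∀ᵐ ω ∂P, X ω = a ∨ X ω = b := by
  have hdisj : Disjoint {ω | X ω = a} {ω | X ω = b} :=
    Set.disjoint_left.2 fun _ ha hb => hab (ha.symm.trans hb)
  have hunion : P ({ω | X ω = a} ∪ {ω | X ω = b}) = 1 := by
    rwa [measure_union hdisj (hX (measurableSet_singleton b))]
  exact (prob_compl_eq_zero_iff ((hX (measurableSet_singleton a)).union
    (hX (measurableSet_singleton b)))).2 hunion

lemma integral_comp_eq_of_ae_eq_or_eq [IsFiniteMeasure P] {E : Type*} [NormedAddCommGroup E]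
    [NormedSpace ℝ E] [CompleteSpace E] (hX : Measurable X) (hab : a ≠ b)
    (hae : ∀ᵐ ω ∂P, X ω = a ∨ X ω = b) (g : α → E) :
    ∫ ω, g (X ω) ∂P = P.real {ω | X ω = a} • g a + P.real {ω | X ω = b} • g b := by
  have hA : MeasurableSet {ω | X ω = a} := hX (measurableSet_singleton a)
  have hB : MeasurableSet {ω | X ω = b} := hX (measurableSet_singleton b)
  have hdisj : Disjoint {ω | X ω = a} {ω | X ω = b} :=
    Set.disjoint_left.2 fun _ ha hb => hab (ha.symm.trans hb)
  have hconst : ∀ c : α, Set.EqOn (fun _ => g c) (fun ω => g (X ω)) {ω | X ω = c} :=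
    fun c ω hω => congrArg g (Eq.symm hω)
  have hint : ∀ c : α, IntegrableOn (fun ω => g (X ω)) {ω | X ω = c} P := fun c =>
    (integrableOn_const (measure_ne_top _ _)).congr_fun (hconst c) (hX (measurableSet_singleton c))
  calc ∫ ω, g (X ω) ∂P
      = ∫ ω in {ω | X ω = a} ∪ {ω | X ω = b}, g (X ω) ∂P := by
        rw [Measure.restrict_eq_self_of_ae_mem (s := {ω | X ω = a} ∪ {ω | X ω = b}) hae]
    _ = ∫ ω in {ω | X ω = a}, g a ∂P + ∫ ω in {ω | X ω = b}, g b ∂P := by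
        rw [setIntegral_union hdisj hB (hint a) (hint b), setIntegral_congr_fun hA (hconst a).symm,
          setIntegral_congr_fun hB (hconst b).symm]
    _ = P.real {ω | X ω = a} • g a + P.real {ω | X ω = b} • g b := by
        rw [setIntegral_const, setIntegral_const]

end TwoValued

lemma measure_le_eq_measure_eq_of_ae_eq_or_eq {Ω α : Type*} [MeasurableSpace Ω] [LinearOrder α]
    {P : Measure Ω} {X : Ω → α} {a b : α} (hba : b < a)
    (hae : ∀ᵐ ω ∂P, X ω = a ∨ X ω = b) : P {ω | a ≤ X ω} = P {ω | X ω = a} := by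
  refine measure_congr (Filter.eventuallyEq_set.2 ?_)
  filter_upwards [hae] with ω hω
  rcases hω with h | h <;> simp [h, hba.not_ge, hba.ne]

lemma div_mul_add_one_sub_div_mul {μ v z : ℝ} (hvz : v ≠ z) (A B : ℝ) :
    (μ - z) / (v - z) * A + (1 - (μ - z) / (v - z)) * B =
      ((μ - z) * A + (v - μ) * B) / (v - z) := by
  field_simp [sub_ne_zero.2 hvz]
  ring

theorem stmt8 {Ω : Type*} [MeasurableSpace Ω] (P : Measure Ω) [IsProbabilityMeasure P]
    (X : Ω → ℝ) (hXm : Measurable X)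
    (μ v z : ℝ) (hμ : 1 < μ) (hv : μ < v)
    (hz : z ∈ Set.Ioo (0 : ℝ) 1)
    (hroot : (v - μ) * Real.log z + (μ - z) * Real.log v = 0)
    (hPv : P {ω | X ω = v} = ENNReal.ofReal ((μ - z) / (v - z)))
    (hPz : P {ω | X ω = z} = ENNReal.ofReal (1 - (μ - z) / (v - z))) :
    (∫ ω, X ω ∂P = μ) ∧ (∫ ω, Real.log (X ω) ∂P = 0) ∧
      (P {ω | v ≤ X ω}).toReal = (μ - z) / (v - z) := by
  have hzv : z < v := by linarith [hz.2]
  set p := (μ - z) / (v - z)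
  have hp0 : 0 ≤ p := div_nonneg (by linarith [hz.2]) (by linarith)
  have hp1 : 0 ≤ 1 - p := sub_nonneg.2 ((div_le_one (by linarith)).2 (by linarith))
  have hae : ∀ᵐ ω ∂P, X ω = v ∨ X ω = z :=
    ae_eq_or_eq_of_measure_add_eq_one hXm hzv.ne' (by
      rw [hPv, hPz, ← ENNReal.ofReal_add hp0 hp1, add_sub_cancel, ENNReal.ofReal_one])
  have hexp (g : ℝ → ℝ) : ∫ ω, g (X ω) ∂P = p * g v + (1 - p) * g z := by
    rw [integral_comp_eq_of_ae_eq_or_eq hXm hzv.ne' hae, measureReal_def, measureReal_def, hPv,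
      hPz, ENNReal.toReal_ofReal hp0, ENNReal.toReal_ofReal hp1, smul_eq_mul, smul_eq_mul]
  refine ⟨?_, ?_, ?_⟩
  · refine (hexp id).trans ?_
    rw [id, id, div_mul_add_one_sub_div_mul hzv.ne']
    field_simp [sub_ne_zero.2 hzv.ne']
    ring
  · rw [hexp Real.log, div_mul_add_one_sub_div_mul hzv.ne', add_comm, hroot, zero_div]
  · rw [measure_le_eq_measure_eq_of_ae_eq_or_eq hzv hae, hPv, ENNReal.toReal_ofReal hp0]
end

section
/- For all positive reals z < v, the function g(x) = a·x − b·ln x + c (with a, b, c as defined from z, v so that g is convex, g(z) = g'(z) = 0, g(v) = 1) satisfies g(x) ≥ 1 whenever x ≥ v; in particular g(x) majorizes the indicator of [v, ∞) on (0,∞). -/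
/-! Writing `D(x) = x - z - z log (x / z)`, the definitions unwind to `a = 1 / D(v)` and
`g = D / D(v)`. Since `log t ≤ t - 1`, `D` is nonnegative, vanishes only at `z`, and is
nondecreasing on `[z, ∞)`; hence `g ≥ 0` everywhere and `g ≥ g(v) = 1` on `[v, ∞)`. -/

open Real

lemma mul_log_div_le_sub {z x : ℝ} (hz : 0 < z) (hx : 0 < x) : z * log (x / z) ≤ x - z := by
  have h := log_le_sub_one_of_pos (div_pos hx hz)
  calc z * log (x / z) ≤ z * (x / z - 1) := by gcongr
    _ = x - z := by field_simp

lemma mul_log_div_lt_sub {z x : ℝ} (hz : 0 < z) (hx : 0 < x) (hxz : x ≠ z) :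
    z * log (x / z) < x - z := by
  have h := log_lt_sub_one_of_pos (div_pos hx hz) (by rwa [Ne, div_eq_one_iff_eq hz.ne'])
  calc z * log (x / z) < z * (x / z - 1) := by gcongr
    _ = x - z := by field_simp

lemma sub_sub_mul_log_div_le_of_le {z v x : ℝ} (hz : 0 < z) (hzv : z ≤ v) (hvx : v ≤ x) :
    v - z - z * log (v / z) ≤ x - z - z * log (x / z) := by
  have hv : 0 < v := hz.trans_le hzv
  have hx : 0 < x := hv.trans_le hvx
  have hlog : log (x / z) - log (v / z) = log (x / v) := by
    rw [log_div hx.ne' hz.ne', log_div hv.ne' hz.ne', log_div hx.ne' hv.ne']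
    ring
  have hxv : 0 ≤ log (x / v) := log_nonneg ((one_le_div hv).2 hvx)
  have := mul_log_div_le_sub hv hx
  nlinarith [mul_le_mul_of_nonneg_right hzv hxv]

theorem stmt11 (v z : ℝ) (hz : 0 < z) (hzv : z < v) :
    let r : ℝ := z / v
    let h : ℝ := 1 - r + r * Real.log r
    let a : ℝ := (1 / v) / h
    let b : ℝ := a * z
    let c : ℝ := a * z * (Real.log z - 1)
    let g : ℝ → ℝ := fun x => a * x - b * Real.log x + c
    (∀ x : ℝ, v ≤ x → 1 ≤ g x) ∧
      ∀ x ∈ Set.Ioi (0 : ℝ), Set.indicator (Set.Ici v) (fun _ => (1 : ℝ)) x ≤ g x := by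
  intro r h a b c g
  have hv : 0 < v := hz.trans hzv
  set D : ℝ → ℝ := fun x => x - z - z * log (x / z) with hD
  have hDv : 0 < D v := sub_pos.2 (mul_log_div_lt_sub hz hv hzv.ne')
  have ha : a = 1 / D v := by
    have hr : log r = -log (v / z) := by rw [← log_inv, inv_div]
    simp only [a, h, hr, r, hD]
    field_simp
    ring
  have hg : ∀ x, 0 < x → g x = D x / D v := by
    intro x hx
    simp only [g, b, c, ha, hD, log_div hx.ne' hz.ne']
    ring
  have hg_ge_one (x : ℝ) (hvx : v ≤ x) : 1 ≤ g x := by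
    rw [hg x (hv.trans_le hvx), one_le_div hDv]
    exact sub_sub_mul_log_div_le_of_le hz hzv.le hvx
  refine ⟨hg_ge_one, fun x (hx : 0 < x) => ?_⟩
  by_cases hvx : v ≤ x
  · simpa [Set.indicator_of_mem (Set.mem_Ici.2 hvx)] using hg_ge_one x hvx
  · rw [Set.indicator_of_notMem (by simpa using hvx), hg x hx]
    exact div_nonneg (sub_nonneg.2 (mul_log_div_le_sub hz hx)) hDv.le
end

section
/- Let μ > 1 and define G_μ(v) = μ·ln v + (v − μ)·ln((v − μ)/ln v) + μ − v. Then G_μ(v)/(v − 1) > 0 for all v ∈ (μ,∞) ∪ (0,1); equivalently, G_μ(v) > 0 for v > μ and G_μ(v) < 0 for 0 < v < 1. -/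
/-!
Write `b = v - μ` and `L = log v`; on the domain they have the same sign, and
`G_μ(v) = μ L + b log (b / L) - b`. The inequality `log x ≥ 1 - 1/x` gives
`b log (b / L) ≥ b - L` when `b, L > 0`, and the reverse inequality when `b, L < 0`.
Hence `G_μ(v) ≥ (μ - 1) L > 0` for `v > μ` and `G_μ(v) ≤ (μ - 1) L < 0` for `0 < v < 1`.
-/

open Real

noncomputable def G (μ v : ℝ) : ℝ :=
  μ * log v + (v - μ) * log ((v - μ) / log v) + μ - v

lemma sub_le_mul_log_div {a b : ℝ} (ha : 0 < a) (hb : 0 < b) :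
    a - b ≤ a * log (a / b) := by
  have h := mul_le_mul_of_nonneg_left (one_sub_inv_le_log_of_pos (div_pos ha hb)) ha.le
  rwa [inv_div, mul_sub, mul_one, mul_div_cancel₀ _ ha.ne'] at h

lemma G_pos {μ v : ℝ} (hμ : 1 < μ) (hv : μ < v) : 0 < G μ v := by
  have hL : 0 < log v := log_pos (by linarith)
  have key := sub_le_mul_log_div (sub_pos.2 hv) hL
  have : 0 < (μ - 1) * log v := mul_pos (by linarith) hL
  unfold G
  linarith

lemma G_neg {μ v : ℝ} (hμ : 1 < μ) (hv₀ : 0 < v) (hv₁ : v < 1) : G μ v < 0 := by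
  have hL : log v < 0 := log_neg hv₀ hv₁
  have key := sub_le_mul_log_div (a := μ - v) (b := -log v) (by linarith) (by linarith)
  rw [← neg_sub v μ, neg_div_neg_eq] at key
  have : (μ - 1) * log v < 0 := mul_neg_of_pos_of_neg (by linarith) hL
  unfold G
  linarith

theorem stmt16 (μ : ℝ) (hμ : 1 < μ) (v : ℝ)
    (hv : v ∈ Set.Ioi μ ∪ Set.Ioo (0 : ℝ) 1) :
    0 < (μ * Real.log v + (v - μ) * Real.log ((v - μ) / Real.log v) + μ - v) / (v - 1) := by
  change 0 < G μ v / (v - 1)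
  rcases hv with hv | ⟨hv₀, hv₁⟩
  · exact div_pos (G_pos hμ hv) (by linarith [Set.mem_Ioi.1 hv])
  · exact div_pos_of_neg_of_neg (G_neg hμ hv₀ hv₁) (by linarith)
end

section
/- Let μ > 1 and v ∈ (μ,∞) ∪ (0,1), let z_v be the root of F(z) = (v−μ)·ln z + (μ−z)·ln v = 0 (in (0,1) if v > μ, in (μ,∞) if v < 1), and z̃_v = (v−μ)/ln v. Then z_v < z̃_v if v > μ, and z_v > z̃_v if 0 < v < 1. -/
/-!
Multiplying the root equation by `log v` gives
`(v - μ - z log v) · log z · log v = (log v)² · (z - μ - z log z)`.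
The right side is negative because `z log z ≥ z - 1 > z - μ`, and in both regimes `log z` and
`log v` have opposite signs, so `z log v < v - μ`; dividing by `log v` gives both inequalities.
-/

open Real

lemma sub_one_le_mul_log {z : ℝ} (hz : 0 < z) : z - 1 ≤ z * log z := by
  have h := mul_le_mul_of_nonneg_left (one_sub_inv_le_log_of_pos hz) hz.le
  rwa [mul_sub, mul_one, mul_inv_cancel₀ hz.ne'] at h

lemma mul_log_lt_sub_of_root {μ v z : ℝ} (hμ : 1 < μ) (hz : 0 < z)
    (hsign : log z * log v < 0)
    (hroot : (v - μ) * log z + (μ - z) * log v = 0) :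
    z * log v < v - μ := by
  have hlv : log v ≠ 0 := fun h => by simp [h] at hsign
  have hneg : (log v) ^ 2 * (z - μ - z * log z) < 0 :=
    mul_neg_of_pos_of_neg (by positivity) (by linarith [sub_one_le_mul_log hz])
  have hfactor : (v - μ - z * log v) * (log z * log v) = (log v) ^ 2 * (z - μ - z * log z) := by
    linear_combination log v * hroot
  have := pos_of_mul_neg_left (hfactor ▸ hneg) hsign.le
  linarith

theorem stmt17 (μ : ℝ) (hμ : 1 < μ) (v z : ℝ)
    (hv : v ∈ Set.Ioi μ ∪ Set.Ioo (0 : ℝ) 1)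
    (hz : (μ < v → z ∈ Set.Ioo (0 : ℝ) 1) ∧ (v < 1 → z ∈ Set.Ioi μ))
    (hroot : (v - μ) * Real.log z + (μ - z) * Real.log v = 0) :
    (μ < v → z < (v - μ) / Real.log v) ∧ (v < 1 → (v - μ) / Real.log v < z) := by
  constructor
  · intro hμv
    obtain ⟨hz0, hz1⟩ := hz.1 hμv
    have hlv : 0 < log v := log_pos (hμ.trans hμv)
    rw [lt_div_iff₀ hlv]
    exact mul_log_lt_sub_of_root hμ hz0 (mul_neg_of_neg_of_pos (log_neg hz0 hz1) hlv) hroot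
  · intro hv1
    have hzμ : μ < z := hz.2 hv1
    have hv0 : 0 < v := hv.elim (fun h => by linarith [Set.mem_Ioi.mp h]) (·.1)
    have hlv : log v < 0 := log_neg hv0 hv1
    rw [div_lt_iff_of_neg hlv]
    exact mul_log_lt_sub_of_root hμ (by linarith)
      (mul_neg_of_pos_of_neg (log_pos (hμ.trans hzμ)) hlv) hroot
end

section
/- Let μ > 1, v > μ, z_v the unique root in (0,1) of (v−μ)·ln z + (μ−z)·ln v = 0, and z̃_v = (v−μ)/ln v. Then z_v = −z̃_v · W₀(−exp(−μ/z̃_v)/z̃_v), where W₀ is the principal branch of Lambert's W function; equivalently, t_v := −z_v/z̃_v ∈ (−1, 0) and t_v·exp(t_v) = −exp(−μ/z̃_v)/z̃_v. -/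
/-!
The root equation says exactly `log z = (z - μ) / z̃`, i.e. `z = exp ((z - μ) / z̃)`. Multiplying by
`exp (-z / z̃)` gives `exp (-μ / z̃) = z · exp (-z / z̃)`, which is the Lambert equation for
`t = -z / z̃`. The bound `t > -1`, i.e. `z < z̃`, comes from `log z ≥ 1 - 1/z`: it turns the
root equation into `z̃ (1 - z) ≥ z (μ - z) > z (1 - z)`.
-/

open Real

lemma log_eq_sub_div_of_root {μ v z : ℝ} (hvμ : v - μ ≠ 0)
    (hroot : (v - μ) * log z + (μ - z) * log v = 0) :
    log z = (z - μ) / ((v - μ) / log v) := by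
  rw [div_div_eq_mul_div, eq_div_iff hvμ]
  linear_combination hroot

lemma lt_of_log_eq_sub_div {μ c z : ℝ} (hμ : 1 < μ) (hc : 0 < c) (hz0 : 0 < z) (hz1 : z < 1)
    (hlog : log z = (z - μ) / c) : z < c := by
  have hlb : (z - 1) / z ≤ (z - μ) / c := by
    rw [← hlog, sub_div, div_self hz0.ne', one_div]
    exact one_sub_inv_le_log_of_pos hz0
  rw [div_le_div_iff₀ hz0 hc] at hlb
  have hgap : z * (1 - z) < c * (1 - z) := by nlinarith
  exact lt_of_mul_lt_mul_right hgap (by linarith)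

lemma neg_div_mul_exp_neg_div_of_exp_eq {μ c z : ℝ} (hz : exp ((z - μ) / c) = z) :
    -z / c * exp (-z / c) = -exp (-μ / c) / c := by
  have hsplit : exp (-μ / c) = z * exp (-z / c) :=
    calc exp (-μ / c) = exp ((z - μ) / c) * exp (-z / c) := by rw [← exp_add]; ring_nf
      _ = z * exp (-z / c) := by rw [hz]
  rw [hsplit]
  ring

theorem stmt18 (μ v z : ℝ) (hμ : 1 < μ) (hv : μ < v)
    (hz : z ∈ Set.Ioo (0 : ℝ) 1)
    (hroot : (v - μ) * Real.log z + (μ - z) * Real.log v = 0) :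
    let zt : ℝ := (v - μ) / Real.log v
    let t : ℝ := -z / zt
    t ∈ Set.Ioo (-1 : ℝ) 0 ∧ t * Real.exp t = -Real.exp (-μ / zt) / zt := by
  intro zt t
  have hlogv : 0 < log v := log_pos (hμ.trans hv)
  have hzt : 0 < zt := div_pos (sub_pos.mpr hv) hlogv
  have hlog : log z = (z - μ) / zt :=
    log_eq_sub_div_of_root (sub_pos.mpr hv).ne' hroot
  refine ⟨⟨?_, div_neg_of_neg_of_pos (neg_neg_of_pos hz.1) hzt⟩, ?_⟩
  · show -1 < -z / zt
    rw [neg_div, neg_lt_neg_iff, div_lt_one hzt]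
    exact lt_of_log_eq_sub_div hμ hzt hz.1 hz.2 hlog
  · exact neg_div_mul_exp_neg_div_of_exp_eq (by rw [← hlog, exp_log hz.1])
end
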